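/- Let Z^a ∈ ℂ^{(r+s)×(r+s)} and Z^b ∈ ℂ^{(s+t)×(s+t)} be sectorial matrices with phases in [α, β], β − α < π. Then Z^a₂₂ + Z^b₁₁ is invertible and the cascade connection Z^c ∈ ℂ^{(r+t)×(r+t)} with blocks Z^c₁₁ = Z^a₁₁ − Z^a₁₂(Z^a₂₂ + Z^b₁₁)⁻¹ Z^a₂₁, Z^c₁₂ = Z^a₁₂(Z^a₂₂ + Z^b₁₁)⁻¹ Z^b₁₂, Z^c₂₁ = Z^b₂₁(Z^a₂₂ + Z^b₁₁)⁻¹ Z^a₂₁, Z^c₂₂ = Z^b₂₂ − Z^b₂₁(Z^a₂₂ + Z^b₁₁)⁻¹ Z^b₁₂, is sectorial with phases in [α, β]. -/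

import Mathlib

/-!
For `β - α < π`, membership in `𝒵[α, β]` is read off the numerical range: `C ∈ 𝒵[α, β]` iff
`x* C x` is a nonzero point of the closed sector `[α, β]` for every `x ≠ 0`. One direction expands
`x* (Tᴴ D T) x = ∑ |(T x)ᵢ|² Dᵢᵢ`. For the other, rotating `C` by the bisector `γ` of the sector
makes its Hermitian part positive definite; a simultaneous congruence diagonalization of the
Hermitian and skew-Hermitian parts gives `C = Sᴴ diag (e^{iγ} (1 + i μⱼ)) S`, and rescaling `S`
makes the diagonal unimodular. Each diagonal entry is a value of the form, hence in the sector.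

A sector of aperture less than `π` is a convex cone containing no line, so adding a point of the
sector to a nonzero one stays away from `0`. The form of `Z^a₂₂ + Z^b₁₁` at `u` is the form of `Z^a`
at `(0, u)` plus that of `Z^b` at `(u, 0)`, so this matrix is invertible. With the internal variable
`p = (Z^a₂₂ + Z^b₁₁)⁻¹ (Z^a₂₁ v - Z^b₁₂ w)`, the form of the cascade at `(v, w)` is the form of `Z^a`
at `(v, -p)` plus that of `Z^b` at `(p, w)`.
-/

open Matrix Complex

noncomputable section

/-- The numerical range of a complex square matrix. -/
def numRange {ι : Type*} [Fintype ι] (C : Matrix ι ι ℂ) : Set ℂ :=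
  {z | ∃ x : ι → ℂ, star x ⬝ᵥ x = 1 ∧ star x ⬝ᵥ C.mulVec x = z}

/-- A matrix is sectorial if its numerical range does not contain 0. -/
def Sectorial {ι : Type*} [Fintype ι] (C : Matrix ι ι ℂ) : Prop :=
  (0 : ℂ) ∉ numRange C

/-- `PhasesIn C α β` : `C` admits a sectorial decomposition `C = Tᴴ D T` with `T`
invertible and `D` diagonal unitary whose diagonal entries have arguments in `[α, β]`. -/
def PhasesIn {ι : Type*} [Fintype ι] [DecidableEq ι] (C : Matrix ι ι ℂ) (α β : ℝ) : Prop :=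
  ∃ T D : Matrix ι ι ℂ, IsUnit T ∧ D.IsDiag ∧ C = Tᴴ * D * T ∧
    ∀ i, ∃ θ : ℝ, α ≤ θ ∧ θ ≤ β ∧ D i i = Complex.exp ((θ : ℂ) * Complex.I)

/-- `C ∈ Z[α, β]` : sectorial with all phases in `[α, β]`. -/
def MemZ {ι : Type*} [Fintype ι] [DecidableEq ι] (C : Matrix ι ι ℂ) (α β : ℝ) : Prop :=
  Sectorial C ∧ PhasesIn C α β

/-- The closed sector `{r e^{jθ} : r ≥ 0, α ≤ θ ≤ β}` in the complex plane. -/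
def sector (α β : ℝ) : Set ℂ :=
  {z | ∃ r θ : ℝ, 0 ≤ r ∧ α ≤ θ ∧ θ ≤ β ∧ z = (r : ℂ) * Complex.exp ((θ : ℂ) * Complex.I)}

open scoped ComplexOrder MatrixOrder ComplexStarModule

section Sector

variable {α β : ℝ} {z w : ℂ}

lemma le_of_mem_sector (h : z ∈ sector α β) : α ≤ β := by
  obtain ⟨-, θ, -, hαθ, hθβ, -⟩ := h
  exact hαθ.trans hθβ

lemma zero_mem_sector (h : α ≤ β) : (0 : ℂ) ∈ sector α β :=
  ⟨0, α, le_rfl, le_rfl, h, by simp⟩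

lemma exists_eq_exp_of_mem_sector (h : z ∈ sector α β) (hz : ‖z‖ = 1) :
    ∃ θ : ℝ, α ≤ θ ∧ θ ≤ β ∧ z = exp (θ * I) := by
  obtain ⟨r, θ, hr, hαθ, hθβ, rfl⟩ := h
  obtain rfl : r = 1 := by simpa [abs_of_nonneg hr] using hz
  exact ⟨θ, hαθ, hθβ, by simp⟩

lemma norm_mul_cos_le_re_of_mem_sector (hlt : β - α ≤ 2 * Real.pi) (hz : z ∈ sector α β) :
    ‖z‖ * Real.cos ((β - α) / 2) ≤ (exp (-(((α + β) / 2 : ℝ) : ℂ) * I) * z).re := by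
  obtain ⟨r, θ, hr, hαθ, hθβ, rfl⟩ := hz
  set γ := (α + β) / 2 with hγ
  have hcos : Real.cos ((β - α) / 2) ≤ Real.cos (θ - γ) := by
    rw [← Real.cos_abs (θ - γ)]
    refine Real.cos_le_cos_of_nonneg_of_le_pi (abs_nonneg _) (by linarith) ?_
    rw [abs_le]; constructor <;> linarith
  have hre : (exp (-(γ : ℂ) * I) * (r * exp (θ * I))).re = r * Real.cos (θ - γ) := by
    rw [mul_left_comm, ← Complex.exp_add, show -(γ : ℂ) * I + θ * I = ((θ - γ : ℝ) : ℂ) * I by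
      push_cast; ring, re_ofReal_mul, exp_ofReal_mul_I_re]
  rw [hre, norm_mul, norm_exp_ofReal_mul_I, mul_one, Complex.norm_of_nonneg hr]
  exact mul_le_mul_of_nonneg_left hcos hr

lemma mem_sector_of_norm_mul_cos_le (hle : α ≤ β)
    (h : ‖z‖ * Real.cos ((β - α) / 2) ≤ (exp (-(((α + β) / 2 : ℝ) : ℂ) * I) * z).re) :
    z ∈ sector α β := by
  rcases eq_or_ne z 0 with rfl | hz
  · exact zero_mem_sector hle
  set γ := (α + β) / 2 with hγ
  set u := exp (-(γ : ℂ) * I) * z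
  have hu : u ≠ 0 := mul_ne_zero (exp_ne_zero _) hz
  have hnorm : ‖u‖ = ‖z‖ := by
    rw [norm_mul, ← ofReal_neg, norm_exp_ofReal_mul_I, one_mul]
  have hcos : Real.cos ((β - α) / 2) ≤ Real.cos u.arg := by
    rw [cos_arg hu, le_div_iff₀ (norm_pos_iff.mpr hu), hnorm, mul_comm]
    exact h
  have harg : |u.arg| ≤ (β - α) / 2 := by
    by_contra! hwide
    have := Real.cos_lt_cos_of_nonneg_of_le_pi (by linarith) (abs_arg_le_pi u) hwide
    rw [Real.cos_abs] at this
    linarith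
  rw [abs_le] at harg
  refine ⟨‖z‖, γ + u.arg, norm_nonneg z, by linarith, by linarith, ?_⟩
  calc z = exp (γ * I) * u := by
        rw [← mul_assoc, ← Complex.exp_add]; simp
    _ = exp (γ * I) * (‖u‖ * exp (u.arg * I)) := by rw [norm_mul_exp_arg_mul_I]
    _ = ‖z‖ * exp (((γ + u.arg : ℝ) : ℂ) * I) := by
        rw [hnorm, mul_left_comm, ← Complex.exp_add]; push_cast; ring_nf

lemma re_pos_of_mem_sector (hlt : β - α < Real.pi) (hz : z ∈ sector α β) (h0 : z ≠ 0) :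
    0 < (exp (-(((α + β) / 2 : ℝ) : ℂ) * I) * z).re := by
  have hle := le_of_mem_sector hz
  have hcos : 0 < Real.cos ((β - α) / 2) := Real.cos_pos_of_mem_Ioo ⟨by linarith, by linarith⟩
  exact (mul_pos (norm_pos_iff.mpr h0) hcos).trans_le
    (norm_mul_cos_le_re_of_mem_sector (by linarith [Real.pi_pos]) hz)

lemma add_mem_sector (hlt : β - α < Real.pi) (hz : z ∈ sector α β) (hw : w ∈ sector α β) :
    z + w ∈ sector α β := by
  have hle := le_of_mem_sector hz
  have hcos : 0 ≤ Real.cos ((β - α) / 2) :=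
    Real.cos_nonneg_of_mem_Icc ⟨by linarith, by linarith⟩
  have h2pi : β - α ≤ 2 * Real.pi := by linarith [Real.pi_pos]
  refine mem_sector_of_norm_mul_cos_le hle ?_
  rw [mul_add, add_re]
  nlinarith [norm_add_le z w, norm_mul_cos_le_re_of_mem_sector h2pi hz,
    norm_mul_cos_le_re_of_mem_sector h2pi hw]

lemma add_mem_sector_diff_zero (hlt : β - α < Real.pi) (hz : z ∈ sector α β \ {0})
    (hw : w ∈ sector α β) : z + w ∈ sector α β \ {0} := by
  refine ⟨add_mem_sector hlt hz.1 hw, fun h0 => ?_⟩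
  have hpos := re_pos_of_mem_sector hlt hz.1 hz.2
  have hnonneg : 0 ≤ (exp (-(((α + β) / 2 : ℝ) : ℂ) * I) * w).re := by
    rcases eq_or_ne w 0 with rfl | hw0
    · simp
    · exact (re_pos_of_mem_sector hlt hw hw0).le
  have : (exp (-(((α + β) / 2 : ℝ) : ℂ) * I) * (z + w)).re = 0 := by
    rw [Set.mem_singleton_iff.mp h0]; simp
  rw [mul_add, add_re] at this
  linarith

lemma sum_mem_sector_diff_zero {ι : Type*} {s : Finset ι} {f : ι → ℂ} {i : ι}
    (hlt : β - α < Real.pi) (hf : ∀ j ∈ s, f j ∈ sector α β) (hi : i ∈ s) (h0 : f i ≠ 0) :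
    ∑ j ∈ s, f j ∈ sector α β \ {0} := by
  classical
  rw [← Finset.add_sum_erase s f hi]
  refine add_mem_sector_diff_zero hlt ⟨hf i hi, h0⟩ ?_
  exact Finset.sum_induction _ _ (fun _ _ => add_mem_sector hlt)
    (zero_mem_sector (le_of_mem_sector (hf i hi))) fun j hj => hf j (Finset.mem_of_mem_erase hj)

end Sector

section QuadraticForm

variable {R n : Type*} [CommRing R] [StarRing R] [Fintype n]

lemma dotProduct_mulVec_conjTranspose_mul_mul (T D : Matrix n n R) (x : n → R) :
    star x ⬝ᵥ (Tᴴ * D * T) *ᵥ x = star (T *ᵥ x) ⬝ᵥ D *ᵥ (T *ᵥ x) := by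
  rw [← mulVec_mulVec, ← mulVec_mulVec, dotProduct_mulVec, ← star_mulVec]

lemma dotProduct_mulVec_conjTranspose (M : Matrix n n R) (x : n → R) :
    star x ⬝ᵥ Mᴴ *ᵥ x = star (star x ⬝ᵥ M *ᵥ x) := by
  rw [dotProduct_mulVec, ← star_mulVec, ← star_dotProduct_star, star_star, dotProduct_comm]

lemma dotProduct_mulVec_single [DecidableEq n] (M : Matrix n n R) (j : n) :
    star (Pi.single j 1 : n → R) ⬝ᵥ M *ᵥ Pi.single j 1 = M j j := by
  simp [Pi.star_single]

lemma isUnit_of_dotProduct_mulVec_ne_zero {K : Type*} [Field K] [StarRing K] [DecidableEq n]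
    {M : Matrix n n K}
    (h : ∀ x ≠ 0, star x ⬝ᵥ M *ᵥ x ≠ 0) : IsUnit M := by
  rw [← mulVec_injective_iff_isUnit]
  intro x y hxy
  by_contra hne
  exact h (x - y) (sub_ne_zero.mpr hne) (by rw [mulVec_sub, hxy, sub_self, dotProduct_zero])

lemma exists_dotProduct_mulVec_eq_apply_self [Nontrivial R] [DecidableEq n] {C T D : Matrix n n R}
    (hT : IsUnit T) (hC : C = Tᴴ * D * T) (j : n) :
    ∃ x ≠ 0, star x ⬝ᵥ C *ᵥ x = D j j := by
  have hx : T *ᵥ (T⁻¹ *ᵥ Pi.single j 1) = Pi.single j 1 := by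
    rw [mulVec_mulVec, mul_nonsing_inv T ((isUnit_iff_isUnit_det T).mp hT), one_mulVec]
  refine ⟨T⁻¹ *ᵥ Pi.single j 1, fun h0 => ?_, ?_⟩
  · simpa [h0] using congr_fun hx j
  · rw [hC, dotProduct_mulVec_conjTranspose_mul_mul, hx, dotProduct_mulVec_single]

lemma sumElim_ne_zero_iff {m k M : Type*} [Zero M] {v : m → M} {w : k → M} :
    Sum.elim v w ≠ 0 ↔ v ≠ 0 ∨ w ≠ 0 := by
  simp only [Ne, funext_iff, Sum.forall, Sum.elim_inl, Sum.elim_inr, Pi.zero_apply, not_and_or]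

lemma dotProduct_mulVec_sumElim {m k : Type*} [Fintype m] [Fintype k]
    (A : Matrix (m ⊕ k) (m ⊕ k) R) (v : m → R) (w : k → R) :
    star (Sum.elim v w) ⬝ᵥ A *ᵥ Sum.elim v w =
      star v ⬝ᵥ A.toBlocks₁₁ *ᵥ v + star v ⬝ᵥ A.toBlocks₁₂ *ᵥ w +
        (star w ⬝ᵥ A.toBlocks₂₁ *ᵥ v + star w ⬝ᵥ A.toBlocks₂₂ *ᵥ w) := by
  conv_lhs => rw [← fromBlocks_toBlocks A]
  rw [Function.star_sumElim, fromBlocks_mulVec, sumElim_dotProduct_sumElim, dotProduct_add,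
    dotProduct_add]
  simp only [Sum.elim_comp_inl, Sum.elim_comp_inr]

end QuadraticForm

section ComplexQuadraticForm

variable {n : Type*} [Fintype n]

lemma dotProduct_mulVec_diagonal [DecidableEq n] (d y : n → ℂ) :
    star y ⬝ᵥ diagonal d *ᵥ y = ∑ i, (normSq (y i) : ℂ) * d i := by
  simp only [mulVec_diagonal, dotProduct, Pi.star_apply, normSq_eq_conj_mul_self]
  exact Finset.sum_congr rfl fun i _ => by rw [star_def]; ring

lemma dotProduct_mulVec_realPart (C : Matrix n n ℂ) (x : n → ℂ) :
    star x ⬝ᵥ (ℜ C : Matrix n n ℂ) *ᵥ x = ((star x ⬝ᵥ C *ᵥ x).re : ℂ) := by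
  rw [realPart_apply_coe, smul_mulVec, dotProduct_smul, add_mulVec, dotProduct_add,
    star_eq_conjTranspose, dotProduct_mulVec_conjTranspose, star_def, add_conj]
  simp

end ComplexQuadraticForm

section Congruence

variable {n : Type*} [Fintype n] [DecidableEq n]

lemma Matrix.PosDef.exists_eq_conjTranspose_mul_self {𝕜 : Type*} [RCLike 𝕜] {H : Matrix n n 𝕜}
    (hH : H.PosDef) : ∃ B : Matrix n n 𝕜, IsUnit B ∧ H = Bᴴ * B := by
  obtain ⟨B, rfl⟩ := CStarAlgebra.nonneg_iff_eq_star_mul_self.mp hH.posSemidef.nonneg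
  refine ⟨B, ?_, rfl⟩
  have := hH.isUnit
  rw [isUnit_iff_isUnit_det, det_mul] at this
  rw [isUnit_iff_isUnit_det]
  exact isUnit_of_mul_isUnit_right this

lemma Matrix.PosDef.exists_congr_diagonal {𝕜 : Type*} [RCLike 𝕜] {H K : Matrix n n 𝕜}
    (hH : H.PosDef) (hK : K.IsHermitian) :
    ∃ S : Matrix n n 𝕜, IsUnit S ∧ ∃ μ : n → ℝ,
      H = Sᴴ * S ∧ K = Sᴴ * diagonal (fun j => (μ j : 𝕜)) * S := by
  obtain ⟨B, hB, rfl⟩ := hH.exists_eq_conjTranspose_mul_self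
  set X := (B⁻¹)ᴴ * K * B⁻¹
  have hX : X.IsHermitian := isHermitian_conjTranspose_mul_mul _ hK
  set U : Matrix n n 𝕜 := (hX.eigenvectorUnitary : Matrix n n 𝕜)
  set μ := hX.eigenvalues
  have hspec : X = U * diagonal (fun j => (μ j : 𝕜)) * Uᴴ := hX.spectral_theorem
  have hUU : U * Uᴴ = 1 := Unitary.coe_mul_star_self hX.eigenvectorUnitary
  have hBB : B⁻¹ * B = 1 := nonsing_inv_mul B ((isUnit_iff_isUnit_det B).mp hB)
  refine ⟨Uᴴ * B, (Unitary.isUnit_coe (U := star hX.eigenvectorUnitary)).mul hB, μ, ?_, ?_⟩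
  · rw [conjTranspose_mul, conjTranspose_conjTranspose, mul_assoc, ← mul_assoc U, hUU, one_mul]
  · calc K = (B⁻¹ * B)ᴴ * K * (B⁻¹ * B) := by rw [hBB, conjTranspose_one, one_mul, mul_one]
      _ = Bᴴ * X * B := by rw [conjTranspose_mul]; simp only [X, mul_assoc]
      _ = (Uᴴ * B)ᴴ * diagonal (fun j => (μ j : 𝕜)) * (Uᴴ * B) := by
        rw [hspec, conjTranspose_mul, conjTranspose_conjTranspose]; simp only [mul_assoc]

lemma exists_congr_diagonal_of_re_pos {C : Matrix n n ℂ}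
    (hC : ∀ x ≠ 0, 0 < (star x ⬝ᵥ C *ᵥ x).re) :
    ∃ S : Matrix n n ℂ, IsUnit S ∧ ∃ μ : n → ℝ,
      C = Sᴴ * diagonal (fun j => 1 + I * μ j) * S := by
  have hH : (ℜ C : Matrix n n ℂ).PosDef :=
    .of_dotProduct_mulVec_pos (ℜ C).2.isHermitian fun x hx => by
      rw [dotProduct_mulVec_realPart]; exact_mod_cast hC x hx
  obtain ⟨S, hS, μ, hre, him⟩ := hH.exists_congr_diagonal (ℑ C).2.isHermitian
  refine ⟨S, hS, μ, ?_⟩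
  calc C = ℜ C + I • ℑ C := (realPart_add_I_smul_imaginaryPart C).symm
    _ = Sᴴ * (1 + I • diagonal (fun j => (μ j : ℂ))) * S := by
      rw [hre, him, mul_add, add_mul, mul_one, Matrix.mul_smul, Matrix.smul_mul]
      rfl
    _ = _ := by rw [← diagonal_one, ← diagonal_smul, diagonal_add]; rfl

lemma exists_congr_diagonal_div_norm {C S : Matrix n n ℂ} {d : n → ℂ} (hS : IsUnit S)
    (hd : ∀ j, d j ≠ 0) (hC : C = Sᴴ * diagonal d * S) :
    ∃ T : Matrix n n ℂ, IsUnit T ∧ C = Tᴴ * diagonal (fun j => d j / ‖d j‖) * T := by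
  set R : Matrix n n ℂ := diagonal fun j => (√‖d j‖ : ℂ)
  have hR : Rᴴ = R := by simp [R, diagonal_conjTranspose]
  have hRDR : R * diagonal (fun j => d j / ‖d j‖) * R = diagonal d := by
    simp only [R, diagonal_mul_diagonal]
    congr 1; funext j
    have hsq : (√‖d j‖ : ℂ) ^ 2 = ‖d j‖ := by
      rw [← ofReal_pow, Real.sq_sqrt (norm_nonneg _)]
    have hne : (‖d j‖ : ℂ) ≠ 0 := ofReal_ne_zero.mpr (norm_ne_zero_iff.mpr (hd j))
    field_simp
    rw [hsq, mul_comm]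
  have hRunit : IsUnit R := by
    rw [isUnit_iff_isUnit_det, det_diagonal, isUnit_iff_ne_zero, Finset.prod_ne_zero_iff]
    exact fun j _ => ofReal_ne_zero.mpr (Real.sqrt_ne_zero'.mpr (norm_pos_iff.mpr (hd j)))
  refine ⟨R * S, hRunit.mul hS, ?_⟩
  rw [hC, conjTranspose_mul, hR, ← hRDR]
  simp only [mul_assoc]

end Congruence

section Phases

variable {n : Type*} [Fintype n] [DecidableEq n] {C : Matrix n n ℂ} {α β : ℝ}

lemma PhasesIn.mapsTo_sector (h : PhasesIn C α β) (hlt : β - α < Real.pi) :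
    Set.MapsTo (fun x => star x ⬝ᵥ C *ᵥ x) {0}ᶜ (sector α β \ {0}) := by
  obtain ⟨T, D, hT, hD, rfl, hphase⟩ := h
  intro x hx
  have hTx : T *ᵥ x ≠ 0 := fun h0 =>
    hx (mulVec_injective_iff_isUnit.mpr hT (by rw [h0, mulVec_zero]))
  obtain ⟨i, hi⟩ := Function.ne_iff.mp hTx
  dsimp only
  rw [dotProduct_mulVec_conjTranspose_mul_mul, ← hD.diagonal_diag, dotProduct_mulVec_diagonal]
  refine sum_mem_sector_diff_zero hlt (fun j _ => ?_) (Finset.mem_univ i) ?_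
  · obtain ⟨θ, hαθ, hθβ, hθ⟩ := hphase j
    exact ⟨_, θ, normSq_nonneg _, hαθ, hθβ, by rw [diag_apply, hθ]⟩
  · obtain ⟨θ, -, -, hθ⟩ := hphase i
    rw [diag_apply, hθ]
    exact mul_ne_zero (by simpa using hi) (exp_ne_zero _)

lemma phasesIn_of_mapsTo_sector (hlt : β - α < Real.pi)
    (h : Set.MapsTo (fun x => star x ⬝ᵥ C *ᵥ x) {0}ᶜ (sector α β \ {0})) :
    PhasesIn C α β := by
  set γ : ℝ := (α + β) / 2
  obtain ⟨S, hS, μ, hrot⟩ := exists_congr_diagonal_of_re_pos (C := exp (-(γ : ℂ) * I) • C)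
    fun x hx => by
      rw [smul_mulVec, dotProduct_smul, smul_eq_mul]
      exact re_pos_of_mem_sector hlt (h hx).1 (h hx).2
  set d : n → ℂ := fun j => exp (γ * I) * (1 + I * μ j)
  have hd : ∀ j, d j ≠ 0 := fun j =>
    mul_ne_zero (exp_ne_zero _) fun h0 => by simpa using congr_arg re h0
  have hC : C = Sᴴ * diagonal d * S := by
    calc C = exp (γ * I) • (exp (-(γ : ℂ) * I) • C) := by
          rw [smul_smul, ← Complex.exp_add]; simp
      _ = Sᴴ * diagonal d * S := by
          rw [hrot, ← Matrix.smul_mul, ← Matrix.mul_smul, ← diagonal_smul]; rfl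
  obtain ⟨T, hT, hCT⟩ := exists_congr_diagonal_div_norm hS hd hC
  refine ⟨T, _, hT, isDiag_diagonal _, hCT, fun j => exists_eq_exp_of_mem_sector ?_ ?_⟩
  · obtain ⟨x, hx, hxj⟩ := exists_dotProduct_mulVec_eq_apply_self hT hCT j
    rw [← hxj]
    exact (h hx).1
  · simp [hd j]

theorem memZ_iff_mapsTo_sector (hlt : β - α < Real.pi) :
    MemZ C α β ↔ Set.MapsTo (fun x => star x ⬝ᵥ C *ᵥ x) {0}ᶜ (sector α β \ {0}) := by
  refine ⟨fun h => h.2.mapsTo_sector hlt, fun h => ⟨?_, phasesIn_of_mapsTo_sector hlt h⟩⟩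
  rintro ⟨x, hx, hx0⟩
  refine (h (x := x) fun h0 => ?_).2 hx0
  rw [Set.mem_singleton_iff.mp h0] at hx
  simp at hx

lemma add_dotProduct_mulVec_mem_sector {m k : Type*} [Fintype m] [Fintype k]
    {M : Matrix m m ℂ} {N : Matrix k k ℂ} (hlt : β - α < Real.pi)
    (hM : Set.MapsTo (fun x => star x ⬝ᵥ M *ᵥ x) {0}ᶜ (sector α β \ {0}))
    (hN : Set.MapsTo (fun y => star y ⬝ᵥ N *ᵥ y) {0}ᶜ (sector α β \ {0}))
    {x : m → ℂ} {y : k → ℂ} (hxy : x ≠ 0 ∨ y ≠ 0) :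
    star x ⬝ᵥ M *ᵥ x + star y ⬝ᵥ N *ᵥ y ∈ sector α β \ {0} := by
  rcases hxy with hx | hy
  · refine add_mem_sector_diff_zero hlt (hM hx) ?_
    rcases eq_or_ne y 0 with rfl | hy
    · simpa using zero_mem_sector (le_of_mem_sector (hM hx).1)
    · exact (hN hy).1
  · rw [add_comm]
    refine add_mem_sector_diff_zero hlt (hN hy) ?_
    rcases eq_or_ne x 0 with rfl | hx
    · simpa using zero_mem_sector (le_of_mem_sector (hN hy).1)
    · exact (hM hx).1

end Phases

section Cascade

variable {R r s t : Type*} [CommRing R] [Fintype s] [DecidableEq s]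

def cascade (Za : Matrix (r ⊕ s) (r ⊕ s) R) (Zb : Matrix (s ⊕ t) (s ⊕ t) R) :
    Matrix (r ⊕ t) (r ⊕ t) R :=
  fromBlocks
    (Za.toBlocks₁₁ - Za.toBlocks₁₂ * (Za.toBlocks₂₂ + Zb.toBlocks₁₁)⁻¹ * Za.toBlocks₂₁)
    (Za.toBlocks₁₂ * (Za.toBlocks₂₂ + Zb.toBlocks₁₁)⁻¹ * Zb.toBlocks₁₂)
    (Zb.toBlocks₂₁ * (Za.toBlocks₂₂ + Zb.toBlocks₁₁)⁻¹ * Za.toBlocks₂₁)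
    (Zb.toBlocks₂₂ - Zb.toBlocks₂₁ * (Za.toBlocks₂₂ + Zb.toBlocks₁₁)⁻¹ * Zb.toBlocks₁₂)

lemma dotProduct_mulVec_cascade [StarRing R] [Fintype r] [Fintype t]
    {Za : Matrix (r ⊕ s) (r ⊕ s) R} {Zb : Matrix (s ⊕ t) (s ⊕ t) R}
    (hE : IsUnit (Za.toBlocks₂₂ + Zb.toBlocks₁₁)) (v : r → R) (w : t → R) (p : s → R)
    (hp : (Za.toBlocks₂₂ + Zb.toBlocks₁₁) *ᵥ p = Za.toBlocks₂₁ *ᵥ v - Zb.toBlocks₁₂ *ᵥ w) :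
    star (Sum.elim v w) ⬝ᵥ cascade Za Zb *ᵥ Sum.elim v w =
      star (Sum.elim v (-p)) ⬝ᵥ Za *ᵥ Sum.elim v (-p) +
        star (Sum.elim p w) ⬝ᵥ Zb *ᵥ Sum.elim p w := by
  set E := Za.toBlocks₂₂ + Zb.toBlocks₁₁
  have hinv : E⁻¹ *ᵥ Za.toBlocks₂₁ *ᵥ v - E⁻¹ *ᵥ Zb.toBlocks₁₂ *ᵥ w = p := by
    rw [← mulVec_sub, ← hp, mulVec_mulVec, nonsing_inv_mul E ((isUnit_iff_isUnit_det E).mp hE),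
      one_mulVec]
  have hEp : star p ⬝ᵥ Za.toBlocks₂₂ *ᵥ p + star p ⬝ᵥ Zb.toBlocks₁₁ *ᵥ p =
      star p ⬝ᵥ Za.toBlocks₂₁ *ᵥ v - star p ⬝ᵥ Zb.toBlocks₁₂ *ᵥ w := by
    rw [← dotProduct_add, ← add_mulVec, hp, dotProduct_sub]
  have hcascade : star (Sum.elim v w) ⬝ᵥ cascade Za Zb *ᵥ Sum.elim v w =
      star v ⬝ᵥ Za.toBlocks₁₁ *ᵥ v + star w ⬝ᵥ Zb.toBlocks₂₂ *ᵥ w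
        - star v ⬝ᵥ Za.toBlocks₁₂ *ᵥ p + star w ⬝ᵥ Zb.toBlocks₂₁ *ᵥ p := by
    rw [dotProduct_mulVec_sumElim, ← hinv]
    simp only [cascade, toBlocks_fromBlocks₁₁, toBlocks_fromBlocks₁₂, toBlocks_fromBlocks₂₁,
      toBlocks_fromBlocks₂₂, sub_mulVec, mulVec_sub, dotProduct_sub, ← mulVec_mulVec]
    ring
  rw [hcascade, dotProduct_mulVec_sumElim, dotProduct_mulVec_sumElim]
  simp only [star_neg, mulVec_neg, dotProduct_neg, neg_dotProduct, neg_neg]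
  linear_combination -hEp

end Cascade

theorem cascade_connection_preserves_phases {r s t : Type*}
    [Fintype r] [Fintype s] [Fintype t] [DecidableEq r] [DecidableEq s] [DecidableEq t]
    (Za : Matrix (r ⊕ s) (r ⊕ s) ℂ) (Zb : Matrix (s ⊕ t) (s ⊕ t) ℂ) (α β : ℝ)
    (hαβ : β - α < Real.pi) (ha : MemZ Za α β) (hb : MemZ Zb α β) :
    IsUnit (Za.toBlocks₂₂ + Zb.toBlocks₁₁) ∧
      MemZ (Matrix.fromBlocks
        (Za.toBlocks₁₁ - Za.toBlocks₁₂ * (Za.toBlocks₂₂ + Zb.toBlocks₁₁)⁻¹ * Za.toBlocks₂₁)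
        (Za.toBlocks₁₂ * (Za.toBlocks₂₂ + Zb.toBlocks₁₁)⁻¹ * Zb.toBlocks₁₂)
        (Zb.toBlocks₂₁ * (Za.toBlocks₂₂ + Zb.toBlocks₁₁)⁻¹ * Za.toBlocks₂₁)
        (Zb.toBlocks₂₂ - Zb.toBlocks₂₁ * (Za.toBlocks₂₂ + Zb.toBlocks₁₁)⁻¹ * Zb.toBlocks₁₂))
        α β := by
  rw [memZ_iff_mapsTo_sector hαβ] at ha hb
  set E := Za.toBlocks₂₂ + Zb.toBlocks₁₁
  have hE : IsUnit E := isUnit_of_dotProduct_mulVec_ne_zero fun u hu => by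
    have hsum := add_dotProduct_mulVec_mem_sector hαβ ha hb (x := Sum.elim 0 u)
      (y := Sum.elim u 0) (.inl (sumElim_ne_zero_iff.mpr (.inr hu)))
    simpa [dotProduct_mulVec_sumElim, E, add_mulVec] using hsum.2
  refine ⟨hE, (memZ_iff_mapsTo_sector hαβ).mpr fun x hx => ?_⟩
  obtain ⟨v, w, rfl⟩ : ∃ v w, x = Sum.elim v w := ⟨_, _, (Sum.elim_comp_inl_inr x).symm⟩
  set p := E⁻¹ *ᵥ (Za.toBlocks₂₁ *ᵥ v - Zb.toBlocks₁₂ *ᵥ w)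
  have hp : E *ᵥ p = Za.toBlocks₂₁ *ᵥ v - Zb.toBlocks₁₂ *ᵥ w := by
    rw [mulVec_mulVec, mul_nonsing_inv E ((isUnit_iff_isUnit_det E).mp hE), one_mulVec]
  change _ ⬝ᵥ cascade Za Zb *ᵥ _ ∈ _
  rw [dotProduct_mulVec_cascade hE v w p hp]
  exact add_dotProduct_mulVec_mem_sector hαβ ha hb <| (sumElim_ne_zero_iff.mp hx).imp
    (fun hv => sumElim_ne_zero_iff.mpr (.inl hv)) (fun hw => sumElim_ne_zero_iff.mpr (.inr hw))
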